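/- arXiv:2111.02568 — 10 statements merged into one kernel-verified Lean document; each statement's English description precedes it below -/
import Mathlib

section
/- Let A be an N×N real matrix, ε > 0, and θ₀ = (θ₁,…,θ_N) ∈ ℝ^N. Suppose the complex vector x₀ with components (x₀)_k = exp(i θ_k) is an eigenvector of A associated with a real eigenvalue λ. Then for every t ≥ 0 the vector x(t) = exp(ε t A) x₀ (where exp denotes the matrix exponential) satisfies x(t) = exp(λ ε t) x₀, and in particular for every index k the complex argument of x(t)_k equals the complex argument of (x₀)_k. (That is, θ₀ is an equilibrium point of the analytical Kuramoto model.) -/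
open Complex Matrix

theorem NormedSpace.exp_mul_of_mul_eq_smul {𝕂 𝔸 : Type*} [RCLike 𝕂] [NormedRing 𝔸]
    [NormedAlgebra ℚ 𝔸] [NormedAlgebra 𝕂 𝔸] [CompleteSpace 𝔸] {a v : 𝔸} {μ : 𝕂}
    (h : a * v = μ • v) : exp a * v = exp μ • v := by
  have hsemi : SemiconjBy v (algebraMap 𝕂 𝔸 μ) a := by
    rw [SemiconjBy, h, Algebra.smul_def, Algebra.commutes]
  have hexp := hsemi.exp_right
  rw [SemiconjBy, ← algebraMap_exp_comm, ← Algebra.commutes, ← Algebra.smul_def] at hexp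
  exact hexp.symm

open scoped Matrix.Norms.Operator in
theorem Matrix.exp_mulVec_of_mulVec_eq_smul {n 𝕂 : Type*} [Fintype n] [DecidableEq n] [RCLike 𝕂]
    {M : Matrix n n 𝕂} {x : n → 𝕂} {μ : 𝕂} (h : M *ᵥ x = μ • x) :
    NormedSpace.exp M *ᵥ x = NormedSpace.exp μ • x := by
  -- Every column of `replicateCol n x` is `x`, so the eigenvector becomes a matrix identity.
  have hcol : M * replicateCol n x = μ • replicateCol n x := by
    rw [← replicateCol_mulVec, h, replicateCol_smul]
  have hexp := NormedSpace.exp_mul_of_mul_eq_smul hcol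
  rw [← replicateCol_mulVec, ← replicateCol_smul] at hexp
  ext i
  exact congrFun (congrFun hexp i) i

theorem analytical_KM_equilibrium_general (N : ℕ) (A : Matrix (Fin N) (Fin N) ℝ)
    (ε : ℝ) (θ : Fin N → ℝ) (lam : ℝ)
    (hx : (A.map Complex.ofReal).mulVec (fun k => Complex.exp (Complex.I * θ k))
        = (lam : ℂ) • fun k => Complex.exp (Complex.I * θ k)) :
    ∀ t : ℝ, 0 ≤ t →
      (NormedSpace.exp (((ε : ℂ) * (t : ℂ)) • A.map Complex.ofReal)).mulVec
          (fun k => Complex.exp (Complex.I * θ k))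
        = Complex.exp ((lam : ℂ) * ε * t) • (fun k => Complex.exp (Complex.I * θ k)) ∧
      ∀ k : Fin N,
        ((NormedSpace.exp (((ε : ℂ) * (t : ℂ)) • A.map Complex.ofReal)).mulVec
            (fun k => Complex.exp (Complex.I * θ k)) k).arg
          = (Complex.exp (Complex.I * θ k)).arg := by
  intro t _
  have hflow := exp_mulVec_of_mulVec_eq_smul (M := ((ε : ℂ) * t) • A.map ofReal)
    (μ := (lam : ℂ) * ε * t) (by rw [smul_mulVec, hx, smul_smul]; ring_nf)
  rw [← exp_eq_exp_ℂ] at hflow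
  refine ⟨hflow, fun k => ?_⟩
  have hreal : Complex.exp ((lam : ℂ) * ε * t) = (Real.exp (lam * ε * t) : ℂ) := by
    push_cast; ring_nf
  rw [hflow, Pi.smul_apply, smul_eq_mul, hreal, arg_real_mul _ (Real.exp_pos _)]

/-- If `x₀ = e^{iθ₀}` (componentwise) is an eigenvector of the real matrix `A`
associated with a real eigenvalue `λ`, then for all `t ≥ 0` the solution
`x(t) = exp(ε t A) x₀` of the analytical Kuramoto model satisfies
`x(t) = e^{λ ε t} x₀`, and componentwise the argument of `x(t)` equals that of `x₀`:
`θ₀` is an equilibrium point of the analytical Kuramoto model. -/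
theorem analytical_KM_equilibrium (N : ℕ) (A : Matrix (Fin N) (Fin N) ℝ)
    (ε : ℝ) (hε : 0 < ε) (θ : Fin N → ℝ) (lam : ℝ)
    (hx : (A.map Complex.ofReal).mulVec (fun k => Complex.exp (Complex.I * θ k))
        = (lam : ℂ) • fun k => Complex.exp (Complex.I * θ k)) :
    ∀ t : ℝ, 0 ≤ t →
      (NormedSpace.exp (((ε : ℂ) * (t : ℂ)) • A.map Complex.ofReal)).mulVec
          (fun k => Complex.exp (Complex.I * θ k))
        = Complex.exp ((lam : ℂ) * ε * t) • (fun k => Complex.exp (Complex.I * θ k)) ∧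
      ∀ k : Fin N,
        ((NormedSpace.exp (((ε : ℂ) * (t : ℂ)) • A.map Complex.ofReal)).mulVec
            (fun k => Complex.exp (Complex.I * θ k)) k).arg
          = (Complex.exp (Complex.I * θ k)).arg :=
  analytical_KM_equilibrium_general N A ε θ lam hx
end

section
/- Let A = (a_ij) be an N×N real matrix and θ₀ = (θ₁,…,θ_N) ∈ ℝ^N. Suppose the complex vector x₀ with components (x₀)_k = exp(i θ_k) is an eigenvector of A associated with a real eigenvalue λ, i.e. ∑_{j=1}^N a_ij exp(i θ_j) = λ exp(i θ_i) for every i with λ real. Then for every i, ∑_{j=1}^N a_ij sin(θ_j − θ_i) = 0; that is, θ₀ is an equilibrium point of the homogeneous Kuramoto model with adjacency matrix A. -/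
/-- If `x₀ = e^{iθ₀}` (componentwise) is an eigenvector of the real matrix `A = (a_ij)`
associated with a real eigenvalue `λ`, i.e. `∑_j a_ij e^{iθ_j} = λ e^{iθ_i}` for all `i`,
then `∑_j a_ij sin(θ_j − θ_i) = 0` for every `i`: `θ₀` is an equilibrium
point of the homogeneous Kuramoto model with adjacency matrix `A`. -/
theorem KM_equilibrium_of_eigenvector (N : ℕ) (a : Matrix (Fin N) (Fin N) ℝ)
    (θ : Fin N → ℝ) (lam : ℝ)
    (h : ∀ i, ∑ j, (a i j : ℂ) * Complex.exp (Complex.I * θ j)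
        = (lam : ℂ) * Complex.exp (Complex.I * θ i)) :
    ∀ i, ∑ j, a i j * Real.sin (θ j - θ i) = 0 := by
  intro i
  have h2 : ∑ j, (a i j : ℂ) * Complex.exp (Complex.I * (↑(θ j) - ↑(θ i)))
      = (lam : ℂ) := by
    have key := congrArg (fun z => z * Complex.exp (-(Complex.I * θ i))) (h i)
    simp only [Finset.sum_mul, mul_assoc, ← Complex.exp_add] at key
    rw [show ((lam:ℂ) * Complex.exp (Complex.I * ↑(θ i) + -(Complex.I * ↑(θ i)))) = (lam:ℂ) by
      rw [show Complex.I * ↑(θ i) + -(Complex.I * ↑(θ i)) = 0 by ring, Complex.exp_zero, mul_one]] at key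
    rw [← key]
    apply Finset.sum_congr rfl
    intro j _
    ring_nf
  have him := congrArg Complex.im h2
  simp only [Complex.im_sum, Complex.ofReal_im] at him
  rw [← him]
  apply Finset.sum_congr rfl
  intro j _
  have : (Complex.I * (↑(θ j) - ↑(θ i))) = (↑(θ j - θ i) : ℝ) * Complex.I := by
    push_cast; ring
  rw [this, Complex.exp_mul_I]
  simp [Complex.mul_im, Complex.add_im, Complex.cos_ofReal_im, Complex.sin_ofReal_im,
    Complex.cos_ofReal_re, Complex.sin_ofReal_re]
  left
  rw [show ((θ j : ℂ) - (θ i : ℂ)) = ((θ j - θ i : ℝ) : ℂ) by push_cast; ring,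
    Complex.cos_ofReal_im, Complex.sin_ofReal_re]
  ring
end

section
/- Let n ≥ 1 and let C be an n×n real symmetric circulant matrix, i.e. C_{lm} = c_{(l−m) mod n} for real numbers c₀,…,c_{n−1} satisfying c_k = c_{(n−k) mod n} for all k. Fix 0 ≤ j ≤ n−1 and define the twisted state θ^{(j)} ∈ ℝ^n by θ^{(j)}_m = 2π j m / n for m = 0,…,n−1. Then for every l, ∑_{m=0}^{n−1} C_{lm} sin(θ^{(j)}_m − θ^{(j)}_l) = 0; that is, θ^{(j)} is an equilibrium point of the homogeneous Kuramoto model with adjacency matrix C. -/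
/-!
Since `C l m = c (l - m)` and, by `2π`-periodicity, `sin (θ_m - θ_l)` only depends on `m - l`
computed in `ℤ/nℤ`, the substitution `k = m - l` turns the `l`-th sum into
`∑ k, c (-k) * sin (2π j k / n)`. This is the sum over the group `Fin n` of an even function
times an odd one, which vanishes under `k ↦ -k`.
-/

open Real

theorem sin_twisted_phase_sub {n : ℕ} (j : ℕ) (a b : Fin n) :
    sin (2 * π * j * (a : ℕ) / n - 2 * π * j * (b : ℕ) / n) =
      sin (2 * π * j * ((a - b : Fin n) : ℕ) / n) := by
  rcases le_or_gt b a with hba | hab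
  · rw [Fin.sub_val_of_le hba, Nat.cast_sub (Fin.le_iff_val_le_val.mp hba)]
    ring_nf
  · have hn : (n : ℝ) ≠ 0 := Nat.cast_ne_zero.mpr a.pos.ne'
    have hb : (b : ℕ) ≤ n + a := by omega
    rw [Fin.coe_sub_iff_lt.mpr hab, Nat.cast_sub hb, ← sin_add_nat_mul_two_pi _ j]
    congr 1
    push_cast
    field_simp
    ring

theorem odd_sin_twisted_phase (n j : ℕ) :
    Function.Odd fun k : Fin n => sin (2 * π * j * (k : ℕ) / n) := by
  intro k
  have : NeZero n := NeZero.of_pos k.pos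
  simpa using (sin_twisted_phase_sub j 0 k).symm

theorem circulant_twisted_state_equilibrium_general (n : ℕ) (c : Fin n → ℝ)
    (hsym : ∀ k : Fin n, c k = c (-k)) (j : Fin n) :
    ∀ l : Fin n, ∑ m : Fin n, Matrix.circulant c l m *
        Real.sin (2 * Real.pi * (j : ℕ) * (m : ℕ) / n
          - 2 * Real.pi * (j : ℕ) * (l : ℕ) / n) = 0 := by
  intro l
  have : NeZero n := NeZero.of_pos l.pos
  set f : Fin n → ℝ := fun k => sin (2 * π * (j : ℕ) * (k : ℕ) / n)
  have hc : Function.Even c := fun k => (hsym k).symm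
  calc ∑ m, Matrix.circulant c l m * sin (2 * π * (j : ℕ) * (m : ℕ) / n
          - 2 * π * (j : ℕ) * (l : ℕ) / n)
      = ∑ m, c (l - m) * f (m - l) := by
        simp only [Matrix.circulant_apply, sin_twisted_phase_sub, f]
    _ = ∑ k, (c * f) k :=
        Fintype.sum_equiv (Equiv.subRight l) _ _ fun m => by
          simp only [Equiv.subRight_apply, Pi.mul_apply, ← hc.eq (m - l), neg_sub]
    _ = 0 := (hc.mul_odd (odd_sin_twisted_phase n j)).sum_eq_zero

/-- For a real symmetric circulant matrix `C` (`C lm = c (l−m)` with `c_k = c_{(n−k) mod n}`)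
and any `0 ≤ j ≤ n − 1`, the twisted state `θ^{(j)}_m = 2π j m / n` is an equilibrium
point of the homogeneous Kuramoto model with adjacency matrix `C`:
`∑_m C_{lm} sin(θ^{(j)}_m − θ^{(j)}_l) = 0` for every `l`. -/
theorem circulant_twisted_state_equilibrium (n : ℕ) (hn : 1 ≤ n) (c : Fin n → ℝ)
    (hsym : ∀ k : Fin n, c k = c (-k)) (j : Fin n) :
    ∀ l : Fin n, ∑ m : Fin n, Matrix.circulant c l m *
        Real.sin (2 * Real.pi * (j : ℕ) * (m : ℕ) / n
          - 2 * Real.pi * (j : ℕ) * (l : ℕ) / n) = 0 :=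
  circulant_twisted_state_equilibrium_general n c hsym j
end

section
/- Let N ≥ 1 and θ₀ = (θ₁,…,θ_N) ∈ ℝ^N. Suppose that for every i, ∑_{j=1}^N sin(θ_j − θ_i) = 0, and suppose that ∑_{j=1}^N exp(i θ_j) ≠ 0. Then for all indices i and j, exp(2 i θ_i) = exp(2 i θ_j); equivalently, all differences θ_i − θ_j are integer multiples of π. -/
/-- If `θ₀` is an equilibrium point of the homogeneous Kuramoto model on the complete
graph (`∑_j sin(θ_j − θ_i) = 0` for all `i`) and `∑_j e^{iθ_j} ≠ 0`, then
`e^{2iθ_i} = e^{2iθ_j}` for all `i, j`; equivalently, all differences `θ_i − θ_j` are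
integer multiples of `π`. -/
theorem complete_graph_equilibrium_nonzero_sum (N : ℕ) (hN : 1 ≤ N) (θ : Fin N → ℝ)
    (heq : ∀ i, ∑ j, Real.sin (θ j - θ i) = 0)
    (hsum : ∑ j, Complex.exp (Complex.I * θ j) ≠ 0) :
    ∀ i j : Fin N,
      Complex.exp (2 * Complex.I * θ i) = Complex.exp (2 * Complex.I * θ j) ∧
      ∃ m : ℤ, θ i - θ j = m * Real.pi := by
  set S : ℂ := ∑ j, Complex.exp (Complex.I * θ j) with hS
  have key : ∀ i : Fin N, (Complex.exp (-(Complex.I * θ i)) * S).im = 0 := by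
    intro i
    have h1 : Complex.exp (-(Complex.I * θ i)) * S
        = ∑ j, Complex.exp (((θ j - θ i : ℝ) : ℂ) * Complex.I) := by
      rw [hS, Finset.mul_sum]
      refine Finset.sum_congr rfl fun j _ => ?_
      rw [← Complex.exp_add]
      congr 1
      push_cast
      ring
    rw [h1, Complex.im_sum]
    have : ∀ j : Fin N, (Complex.exp (((θ j - θ i : ℝ) : ℂ) * Complex.I)).im
        = Real.sin (θ j - θ i) := fun j => Complex.exp_ofReal_mul_I_im _
    simp only [this]
    exact heq i
  have hne : ∀ i : Fin N, Complex.exp (-(Complex.I * θ i)) * S ≠ 0 := fun i =>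
    mul_ne_zero (Complex.exp_ne_zero _) hsum
  have main : ∀ i j : Fin N, ∃ m : ℤ, θ i - θ j = m * Real.pi := by
    intro i j
    have hrel : Complex.exp (-(Complex.I * θ i)) * S
        = Complex.exp (((θ j - θ i : ℝ) : ℂ) * Complex.I)
          * (Complex.exp (-(Complex.I * θ j)) * S) := by
      rw [← mul_assoc, ← Complex.exp_add]
      congr 2
      push_cast
      ring
    have him : Real.sin (θ j - θ i) * (Complex.exp (-(Complex.I * θ j)) * S).re = 0 := by
      have h0 := key i
      rw [hrel, Complex.mul_im, key j, Complex.exp_ofReal_mul_I_im,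
        Complex.exp_ofReal_mul_I_re] at h0
      linarith [h0]
    have hre : (Complex.exp (-(Complex.I * θ j)) * S).re ≠ 0 := by
      intro h
      apply hne j
      exact Complex.ext h (key j)
    have hsin : Real.sin (θ j - θ i) = 0 := by
      rcases mul_eq_zero.mp him with h | h
      · exact h
      · exact absurd h hre
    rcases Real.sin_eq_zero_iff.mp hsin with ⟨n, hn⟩
    exact ⟨-n, by push_cast; linarith⟩
  intro i j
  refine ⟨?_, main i j⟩
  obtain ⟨m, hm⟩ := main i j
  have hc : ((θ i : ℂ)) - θ j = (m : ℂ) * Real.pi := by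
    exact_mod_cast congrArg (fun x : ℝ => (x : ℂ)) hm
  have hdiff : (2 : ℂ) * Complex.I * θ i
      = 2 * Complex.I * θ j + (m : ℂ) * (2 * (Real.pi : ℂ)) * Complex.I := by
    linear_combination (2 * Complex.I) * hc
  rw [hdiff, Complex.exp_add,
    show ((m : ℂ) * (2 * (Real.pi : ℂ)) * Complex.I) = (m : ℂ) * (2 * Real.pi * Complex.I) by ring,
    Complex.exp_int_mul_two_pi_mul_I, mul_one]
end

section
/- Let N ≥ 1 and θ₀ = (θ₁,…,θ_N) ∈ ℝ^N. Then θ₀ is an equilibrium point of the homogeneous Kuramoto model on the complete graph K_N, i.e. ∑_{j=1}^N sin(θ_j − θ_i) = 0 for every i, if and only if at least one of the following holds: (1) all pairwise differences θ_i − θ_j are integer multiples of π; or (2) ∑_{j=1}^N exp(i θ_j) = 0. -/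
/-!
With the order parameter `S = ∑ⱼ e^{iθⱼ} = ‖S‖ e^{i arg S}`, the coupling felt by oscillator `i` is
`∑ⱼ sin (θⱼ - θᵢ) = Im (S e^{-iθᵢ}) = ‖S‖ sin (arg S - θᵢ)`. So either `S = 0`, or every `θᵢ` lies
in `arg S + πℤ`, which makes all differences integer multiples of `π`.
-/

open Complex

lemma Complex.im_mul_exp_neg_I_mul (z : ℂ) (t : ℝ) :
    (z * exp (-(I * t))).im = ‖z‖ * Real.sin (arg z - t) := by
  conv_lhs => rw [← norm_mul_exp_arg_mul_I z]
  have h : (arg z : ℂ) * I + -(I * t) = ((arg z - t : ℝ) : ℂ) * I := by push_cast; ring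
  rw [mul_assoc, ← exp_add, h, im_ofReal_mul, exp_ofReal_mul_I_im]

lemma Complex.im_sum_exp_I_mul_mul_exp_neg_I_mul {ι : Type*} (s : Finset ι) (θ : ι → ℝ) (t : ℝ) :
    ((∑ j ∈ s, exp (I * θ j)) * exp (-(I * t))).im = ∑ j ∈ s, Real.sin (θ j - t) := by
  rw [Finset.sum_mul, im_sum]
  refine Finset.sum_congr rfl fun j _ => ?_
  have h : I * θ j + -(I * t) = ((θ j - t : ℝ) : ℂ) * I := by push_cast; ring
  rw [← exp_add, h, exp_ofReal_mul_I_im]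

lemma sum_sin_sub_eq_norm_mul_sin_arg_sub {ι : Type*} (s : Finset ι) (θ : ι → ℝ) (t : ℝ) :
    ∑ j ∈ s, Real.sin (θ j - t) =
      ‖∑ j ∈ s, exp (I * θ j)‖ * Real.sin (arg (∑ j ∈ s, exp (I * θ j)) - t) := by
  rw [← im_sum_exp_I_mul_mul_exp_neg_I_mul, im_mul_exp_neg_I_mul]

theorem complete_graph_equilibrium_iff_general (N : ℕ) (θ : Fin N → ℝ) :
    (∀ i, ∑ j, Real.sin (θ j - θ i) = 0) ↔
      ((∀ i j : Fin N, ∃ m : ℤ, θ i - θ j = m * Real.pi) ∨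
        ∑ j, Complex.exp (Complex.I * θ j) = 0) := by
  set S := ∑ j, exp (I * θ j) with hS
  constructor
  · intro h
    refine or_iff_not_imp_right.mpr fun hS0 i j => ?_
    have hsin : ∀ k, Real.sin (arg S - θ k) = 0 := fun k => by
      have hk := h k
      rw [sum_sin_sub_eq_norm_mul_sin_arg_sub, ← hS] at hk
      exact (mul_eq_zero.mp hk).resolve_left (norm_ne_zero_iff.mpr hS0)
    obtain ⟨n, hn⟩ := Real.sin_eq_zero_iff.mp (hsin i)
    obtain ⟨m, hm⟩ := Real.sin_eq_zero_iff.mp (hsin j)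
    exact ⟨m - n, by push_cast; linarith⟩
  · rintro (h | h) i
    · refine Finset.sum_eq_zero fun j _ => ?_
      obtain ⟨m, hm⟩ := h j i
      rw [hm, Real.sin_int_mul_pi]
    · rw [sum_sin_sub_eq_norm_mul_sin_arg_sub, ← hS, h, norm_zero, zero_mul]

/-- Complete classification of equilibrium points on the complete graph `K_N`:
`θ₀` is an equilibrium point of the homogeneous Kuramoto model on `K_N`
(`∑_j sin(θ_j − θ_i) = 0` for all `i`) if and only if either all pairwise differences
`θ_i − θ_j` are integer multiples of `π`, or `∑_j e^{iθ_j} = 0`. -/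
theorem complete_graph_equilibrium_iff (N : ℕ) (hN : 1 ≤ N) (θ : Fin N → ℝ) :
    (∀ i, ∑ j, Real.sin (θ j - θ i) = 0) ↔
      ((∀ i j : Fin N, ∃ m : ℤ, θ i - θ j = m * Real.pi) ∨
        ∑ j, Complex.exp (Complex.I * θ j) = 0) :=
  complete_graph_equilibrium_iff_general N θ
end

section
/- Let A = (a_ij) be an N×N real matrix, φ ∈ ℝ, and θ₀ = (θ₁,…,θ_N) ∈ ℝ^N. Suppose the complex vector x₀ with components (x₀)_k = exp(i θ_k) is an eigenvector of A associated with a complex eigenvalue λ such that λ exp(−iφ) is real. Then for every i, ∑_{j=1}^N a_ij sin(θ_j − θ_i − φ) = 0; that is, θ₀ is an equilibrium point of the homogeneous phase-lag Kuramoto model with adjacency matrix A and phase lag φ. -/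
/-- If `x₀ = e^{iθ₀}` (componentwise) is an eigenvector of the real matrix `A = (a_ij)`
associated with a complex eigenvalue `λ` such that `λ e^{−iφ}` is real, then
`∑_j a_ij sin(θ_j − θ_i − φ) = 0` for every `i`: `θ₀` is an equilibrium point of the
homogeneous phase-lag Kuramoto model with adjacency matrix `A` and phase lag `φ`. -/
theorem phase_lag_KM_equilibrium (N : ℕ) (a : Matrix (Fin N) (Fin N) ℝ)
    (φ : ℝ) (θ : Fin N → ℝ) (lam : ℂ)
    (h : ∀ i, ∑ j, (a i j : ℂ) * Complex.exp (Complex.I * θ j)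
        = lam * Complex.exp (Complex.I * θ i))
    (hreal : (lam * Complex.exp (-(φ : ℂ) * Complex.I)).im = 0) :
    ∀ i, ∑ j, a i j * Real.sin (θ j - θ i - φ) = 0 := by
  intro i
  have key : (∑ j, (a i j : ℂ) * Complex.exp (Complex.I * (↑(θ j - θ i - φ)))).im = 0 := by
    have e1 : ∑ j, (a i j : ℂ) * Complex.exp (Complex.I * (↑(θ j - θ i - φ)))
        = Complex.exp (Complex.I * (-(θ i : ℂ) - φ)) *
            ∑ j, (a i j : ℂ) * Complex.exp (Complex.I * θ j) := by
      rw [Finset.mul_sum]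
      refine Finset.sum_congr rfl fun j _ => ?_
      rw [← mul_assoc, mul_comm (Complex.exp _) ((a i j : ℂ)), mul_assoc, ← Complex.exp_add]
      push_cast
      ring_nf
    rw [e1, h i, ← mul_assoc, mul_comm (Complex.exp _) lam, mul_assoc, ← Complex.exp_add]
    have e2 : Complex.I * (-(θ i : ℂ) - φ) + Complex.I * θ i = -(φ : ℂ) * Complex.I := by ring
    rw [e2, hreal]
  rw [← key, Complex.im_sum]
  refine Finset.sum_congr rfl fun j _ => ?_
  rw [mul_comm Complex.I]
  rw [show ((a i j : ℂ) * Complex.exp ((θ j - θ i - φ : ℝ) * Complex.I)).im = a i j * (Complex.exp ((θ j - θ i - φ : ℝ) * Complex.I)).im from by simp [Complex.mul_im], Complex.exp_ofReal_mul_I_im]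
end

section
/- Let G be a finite group, let a : G → ℝ, and let A be the G-circulant matrix with entries A_{τσ} = a(τ⁻¹σ). Let χ : G → ℂ^× be a group homomorphism, let Y_χ = ∑_{σ ∈ G} a(σ) χ(σ), and let φ = arg(Y_χ) be the principal argument of Y_χ. Then for every τ ∈ G, ∑_{σ ∈ G} a(τ⁻¹σ) sin(arg(χ(σ)) − arg(χ(τ)) − φ) = 0; that is, the point θ₀ = (arg(χ(σ)))_{σ ∈ G} is an equilibrium point of the homogeneous phase-lag Kuramoto model with adjacency matrix A and phase lag φ. -/
/-! The vector `(χ σ)_σ` is an eigenvector of the `G`-circulant matrix with eigenvalue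
`Y_χ = ∑_σ a(σ) χ(σ)`: `∑_σ a(τ⁻¹σ) χ(σ) = χ(τ) Y_χ`. Since `|χ(σ)| = 1`, the `τ`-th
equation of the model is the imaginary part of this identity rotated by
`exp(-i (arg χ(τ) + arg Y_χ))`, a rotation which turns its right-hand side into the real
number `|Y_χ|`. -/

open Complex

theorem sum_apply_inv_mul_mul_monoidHom {G R : Type*} [Group G] [Fintype G] [CommSemiring R]
    (a : G → R) (χ : G →* Rˣ) (τ : G) :
    ∑ σ, a (τ⁻¹ * σ) * χ σ = χ τ * ∑ σ, a σ * χ σ := by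
  rw [Finset.mul_sum, ← Equiv.sum_comp (Equiv.mulLeft τ)]
  simp only [Equiv.coe_mulLeft, inv_mul_cancel_left, map_mul, Units.val_mul, mul_left_comm]

theorem MonoidHom.norm_units_apply_eq_one {G : Type*} [Group G] [Finite G] (χ : G →* ℂˣ)
    (g : G) : ‖(χ g : ℂ)‖ = 1 := by
  refine norm_eq_one_of_pow_eq_one ?_ (Nat.card_pos (α := G)).ne'
  rw [← Units.val_pow_eq_pow_val, ← map_pow, pow_card_eq_one', map_one, Units.val_one]

theorem Complex.mul_exp_neg_arg_mul_I (z : ℂ) : z * exp (-(z.arg : ℂ) * I) = ‖z‖ := by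
  nth_rewrite 1 [← norm_mul_exp_arg_mul_I z]
  rw [mul_assoc, ← exp_add, neg_mul, add_neg_cancel, exp_zero, mul_one]

theorem Complex.sin_arg_sub_eq_im {z : ℂ} (hz : ‖z‖ = 1) (θ : ℝ) :
    Real.sin (z.arg - θ) = (z * exp (-(θ : ℂ) * I)).im := by
  nth_rewrite 2 [← norm_mul_exp_arg_mul_I z]
  rw [hz, ofReal_one, one_mul, ← exp_add, ← exp_ofReal_mul_I_im, ofReal_sub, sub_mul, neg_mul,
    sub_eq_add_neg]

/-- For a finite group `G`, a real function `a : G → ℝ`, the `G`-circulant matrix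
`A_{τσ} = a(τ⁻¹σ)`, a 1-dimensional representation `χ : G → ℂˣ`,
`Y_χ = ∑_σ a(σ) χ(σ)` and `φ = arg(Y_χ)`, the point `θ₀ = (arg χ(σ))_{σ∈G}` is an
equilibrium point of the homogeneous phase-lag Kuramoto model with adjacency matrix `A`
and phase lag `φ`: for every `τ`, `∑_σ a(τ⁻¹σ) sin(arg χ(σ) − arg χ(τ) − φ) = 0`. -/
theorem G_circulant_phase_lag_equilibrium (G : Type*) [Group G] [Fintype G]
    (a : G → ℝ) (χ : G →* ℂˣ) :
    ∀ τ : G, ∑ σ : G, a (τ⁻¹ * σ) *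
        Real.sin ((χ σ : ℂ).arg - (χ τ : ℂ).arg
          - (∑ σ : G, (a σ : ℂ) * (χ σ : ℂ)).arg) = 0 := by
  intro τ
  set Y : ℂ := ∑ σ : G, (a σ : ℂ) * (χ σ : ℂ)
  have hrotate :
      (χ τ : ℂ) * Y * exp (-(((χ τ : ℂ).arg + Y.arg : ℝ) : ℂ) * I) = ‖Y‖ := by
    rw [ofReal_add, neg_add, add_mul, exp_add, mul_mul_mul_comm, mul_exp_neg_arg_mul_I,
      mul_exp_neg_arg_mul_I, χ.norm_units_apply_eq_one, ofReal_one, one_mul]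
  calc ∑ σ, a (τ⁻¹ * σ) * Real.sin ((χ σ : ℂ).arg - (χ τ : ℂ).arg - Y.arg)
      = ((∑ σ, (a (τ⁻¹ * σ) : ℂ) * χ σ) *
          exp (-(((χ τ : ℂ).arg + Y.arg : ℝ) : ℂ) * I)).im := by
        simp only [sub_sub, sin_arg_sub_eq_im (χ.norm_units_apply_eq_one _), Finset.sum_mul,
          im_sum, mul_assoc, im_ofReal_mul]
    _ = 0 := by
        rw [sum_apply_inv_mul_mul_monoidHom (fun σ ↦ (a σ : ℂ)) χ τ, hrotate, ofReal_im]
end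

section
/- Let k₁, k₂ ≥ 1, let C be the k₁×k₁ circulant matrix with first column [c₀,…,c_{k₁−1}] and D the k₂×k₂ circulant matrix with first column [d₀,…,d_{k₂−1}] (complex entries), and let α, β ∈ ℝ. Let A be the (k₁+k₂)×(k₁+k₂) block matrix whose top-left block is C, top-right block is the k₁×k₂ matrix with all entries α, bottom-left block is the k₂×k₁ matrix with all entries β, and bottom-right block is D. Write ω_{k} = exp(2πi/k). Then: (1) for each 1 ≤ j ≤ k₁−1, the vector w_j = (1, ω_{k₁}^j, ω_{k₁}^{2j}, …, ω_{k₁}^{(k₁−1)j}, 0, …, 0)ᵀ (with k₂ trailing zeros) is an eigenvector of A associated with the eigenvalue λ_j^C = c₀ + c_{k₁−1} ω_{k₁}^{j} + c_{k₁−2} ω_{k₁}^{2j} + ⋯ + c₁ ω_{k₁}^{(k₁−1)j}; and (2) for each 1 ≤ j ≤ k₂−1, the vector z_j = (0, …, 0, 1, ω_{k₂}^j, ω_{k₂}^{2j}, …, ω_{k₂}^{(k₂−1)j})ᵀ (with k₁ leading zeros) is an eigenvector of A associated with the eigenvalue λ_j^D = d₀ + d_{k₂−1} ω_{k₂}^{j}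 + d_{k₂−2} ω_{k₂}^{2j} + ⋯ + d₁ ω_{k₂}^{(k₂−1)j}. -/
lemma sum_pow_zero (k j : ℕ) (hk : 1 ≤ k) (hj1 : 1 ≤ j) (hj2 : j ≤ k - 1) :
    ∑ m : Fin k, Complex.exp (2 * Real.pi * Complex.I / k) ^ (j * (m : ℕ)) = 0 := by
  set ω := Complex.exp (2 * Real.pi * Complex.I / k) with hωdef
  have hprim : IsPrimitiveRoot ω k := Complex.isPrimitiveRoot_exp k (by omega)
  have hx : (ω ^ j) ^ k = 1 := by
    rw [← pow_mul, mul_comm, pow_mul, hprim.pow_eq_one, one_pow]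
  have hx1 : ω ^ j ≠ 1 := by
    intro h
    have h2 := (hprim.pow_eq_one_iff_dvd j).mp h
    have := Nat.le_of_dvd (by omega) h2
    omega
  have heq : ∑ m : Fin k, ω ^ (j * (m : ℕ)) = ∑ i ∈ Finset.range k, (ω ^ j) ^ i := by
    rw [Finset.sum_range fun i => (ω ^ j) ^ i]
    exact Finset.sum_congr rfl fun m _ => by rw [← pow_mul]
  rw [heq, geom_sum_eq hx1, hx, sub_self, zero_div]

lemma circ_eig (k : ℕ) (hk : 1 ≤ k) (c : Fin k → ℂ) (ω : ℂ) (hω : ω ^ k = 1) (j : ℕ) (l : Fin k) :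
    ∑ m : Fin k, c (l - m) * ω ^ (j * (m : ℕ))
      = (∑ m : Fin k, c (-m) * ω ^ ((m : ℕ) * j)) * ω ^ (j * (l : ℕ)) := by
  haveI : NeZero k := ⟨by omega⟩
  have key : ∀ a : ℕ, ω ^ a = ω ^ (a % k) := fun a => by
    conv_lhs => rw [← Nat.div_add_mod a k]
    rw [pow_add, pow_mul, hω, one_pow, one_mul]
  rw [Finset.sum_mul]
  refine (Fintype.sum_equiv (Equiv.addRight l) _ _ fun m => ?_).symm
  simp only [Equiv.coe_addRight]
  have h1 : l - (m + l) = -m := by abel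
  have h2 : ω ^ (j * ((m + l : Fin k) : ℕ)) = ω ^ ((m : ℕ) * j) * ω ^ (j * (l : ℕ)) := by
    rw [Fin.val_add, key (j * (((m:ℕ) + (l:ℕ)) % k)), ← pow_add, key ((m:ℕ)*j + j*(l:ℕ))]
    congr 1
    rw [Nat.mul_comm (m:ℕ) j, ← Nat.mul_add]
    conv_lhs => rw [Nat.mul_mod]
    conv_rhs => rw [Nat.mul_mod]
    simp
  rw [h1, h2, mul_assoc]

lemma root_pow (k : ℕ) (hk : 1 ≤ k) :
    Complex.exp (2 * Real.pi * Complex.I / k) ^ k = 1 :=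
  (Complex.isPrimitiveRoot_exp k (by omega)).pow_eq_one

/-- Let `A` be the block matrix with diagonal blocks the circulant matrices `C` (size `k₁`,
first column `c`) and `D` (size `k₂`, first column `d`), constant off-diagonal blocks `α`
(top-right) and `β` (bottom-left). Then for `1 ≤ j ≤ k₁ − 1` the vector
`w_j = (1, ω_{k₁}^j, …, ω_{k₁}^{(k₁−1)j}, 0, …, 0)ᵀ` is an eigenvector of `A` with
eigenvalue `λ_j^C = ∑_{m=0}^{k₁−1} c_{(k₁−m) mod k₁} ω_{k₁}^{m j}`, and for
`1 ≤ j ≤ k₂ − 1` the vector `z_j = (0, …, 0, 1, ω_{k₂}^j, …, ω_{k₂}^{(k₂−1)j})ᵀ` is an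
eigenvector of `A` with eigenvalue `λ_j^D = ∑_{m=0}^{k₂−1} d_{(k₂−m) mod k₂} ω_{k₂}^{m j}`. -/
theorem join_of_circulants_eigenvectors (k₁ k₂ : ℕ) (hk₁ : 1 ≤ k₁) (hk₂ : 1 ≤ k₂)
    (c : Fin k₁ → ℂ) (d : Fin k₂ → ℂ) (α β : ℝ) :
    let A : Matrix (Fin k₁ ⊕ Fin k₂) (Fin k₁ ⊕ Fin k₂) ℂ :=
      Matrix.fromBlocks (Matrix.circulant c) (Matrix.of fun _ _ => (α : ℂ))
        (Matrix.of fun _ _ => (β : ℂ)) (Matrix.circulant d)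
    (∀ j : ℕ, 1 ≤ j → j ≤ k₁ - 1 →
      A.mulVec (Sum.elim
          (fun m : Fin k₁ => Complex.exp (2 * Real.pi * Complex.I / k₁) ^ (j * (m : ℕ)))
          (0 : Fin k₂ → ℂ))
        = (∑ m : Fin k₁, c (-m) * Complex.exp (2 * Real.pi * Complex.I / k₁) ^ ((m : ℕ) * j)) •
          Sum.elim
            (fun m : Fin k₁ => Complex.exp (2 * Real.pi * Complex.I / k₁) ^ (j * (m : ℕ)))
            (0 : Fin k₂ → ℂ)) ∧
    (∀ j : ℕ, 1 ≤ j → j ≤ k₂ - 1 →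
      A.mulVec (Sum.elim (0 : Fin k₁ → ℂ)
          (fun m : Fin k₂ => Complex.exp (2 * Real.pi * Complex.I / k₂) ^ (j * (m : ℕ))))
        = (∑ m : Fin k₂, d (-m) * Complex.exp (2 * Real.pi * Complex.I / k₂) ^ ((m : ℕ) * j)) •
          Sum.elim (0 : Fin k₁ → ℂ)
            (fun m : Fin k₂ => Complex.exp (2 * Real.pi * Complex.I / k₂) ^ (j * (m : ℕ)))) := by
  intro A
  constructor
  · intro j hj1 hj2
    funext i
    cases i with
    | inl l =>
      simp only [A, Matrix.mulVec, dotProduct, Fintype.sum_sum_type,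
        Matrix.fromBlocks_apply₁₁, Matrix.fromBlocks_apply₁₂, Sum.elim_inl, Sum.elim_inr,
        Matrix.circulant_apply, Matrix.of_apply, Pi.smul_apply, smul_eq_mul,
        Pi.zero_apply, mul_zero, Finset.sum_const_zero, add_zero]
      exact circ_eig k₁ hk₁ c _ (root_pow k₁ hk₁) j l
    | inr l =>
      simp only [A, Matrix.mulVec, dotProduct, Fintype.sum_sum_type,
        Matrix.fromBlocks_apply₂₁, Matrix.fromBlocks_apply₂₂, Sum.elim_inl, Sum.elim_inr,
        Matrix.circulant_apply, Matrix.of_apply, Pi.smul_apply, smul_eq_mul,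
        Pi.zero_apply, mul_zero, Finset.sum_const_zero, add_zero]
      rw [← Finset.mul_sum, sum_pow_zero k₁ j hk₁ hj1 hj2, mul_zero]
  · intro j hj1 hj2
    funext i
    cases i with
    | inl l =>
      simp only [A, Matrix.mulVec, dotProduct, Fintype.sum_sum_type,
        Matrix.fromBlocks_apply₁₁, Matrix.fromBlocks_apply₁₂, Sum.elim_inl, Sum.elim_inr,
        Matrix.circulant_apply, Matrix.of_apply, Pi.smul_apply, smul_eq_mul,
        Pi.zero_apply, mul_zero, Finset.sum_const_zero, zero_add]
      rw [← Finset.mul_sum, sum_pow_zero k₂ j hk₂ hj1 hj2, mul_zero]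
    | inr l =>
      simp only [A, Matrix.mulVec, dotProduct, Fintype.sum_sum_type,
        Matrix.fromBlocks_apply₂₁, Matrix.fromBlocks_apply₂₂, Sum.elim_inl, Sum.elim_inr,
        Matrix.circulant_apply, Matrix.of_apply, Pi.smul_apply, smul_eq_mul,
        Pi.zero_apply, mul_zero, Finset.sum_const_zero, zero_add]
      exact circ_eig k₂ hk₂ d _ (root_pow k₂ hk₂) j l
end

section
/- Let k ≥ 1, let C be a k×k real symmetric circulant matrix (C_{lm} = c_{(l−m) mod k} with c_m = c_{(k−m) mod k} for all m), and let α, β ∈ ℝ. Let A be the 2k×2k block matrix whose diagonal blocks are both C, whose top-right block has all entries α, and whose bottom-left block has all entries β. Fix 1 ≤ j ≤ k−1 and φ ∈ [0, 2π), and define θ₀ ∈ ℝ^{2k} by θ₀_m = 2π j m / k for 0 ≤ m ≤ k−1 and θ₀_{k+m} = 2π j m / k + φ for 0 ≤ m ≤ k−1. Then for every index i ∈ {0,…,2k−1}, ∑_{m=0}^{2k−1} A_{im} sin(θ₀_m − θ₀_i) = 0; that is, θ₀ is an equilibrium point of the homogeneous Kuramoto model with adjacency matrix A. -/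
open Real Finset

/-! On each layer `θ` is the twisted state `m ↦ 2πjm/k`, whose angles are additive modulo `2π`.
Row `p` of the Kuramoto sum splits into an intra-layer part `∑ₘ c (p - m) sin (θₘ - θₚ)` and a
constant times an inter-layer part `∑ₘ sin (2πjm/k + x)`. Shifting `m` by `p` turns the first into
`∑ₘ cₘ sin (2πjm/k)`, the sum of an even times an odd function on `Fin k`, hence `0`. The second is
the imaginary part of `e^{ix}` times the geometric sum of the `k`-th root of unity `e^{2πij/k} ≠ 1`,
hence `0` as well. -/

noncomputable def modeAngle (k j : ℕ) (m : Fin k) : ℝ := 2 * π * j * (m : ℕ) / k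

section

variable {k : ℕ} (j : ℕ)

theorem modeAngle_add (m p : Fin k) :
    ∃ n : ℕ, modeAngle k j (m + p) = modeAngle k j m + modeAngle k j p - n * (2 * π) := by
  have hk : (k : ℝ) ≠ 0 := by exact_mod_cast m.pos.ne'
  have hval : ((m + p : Fin k) : ℕ) + k * (((m : ℕ) + p) / k) = m + p := by
    rw [Fin.val_add]; exact Nat.mod_add_div _ _
  have hvalR : (((m + p : Fin k) : ℕ) : ℝ) =
      (m : ℕ) + (p : ℕ) - k * ((((m : ℕ) + p) / k : ℕ) : ℝ) := by
    rw [eq_sub_iff_add_eq]; exact_mod_cast hval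
  refine ⟨j * (((m : ℕ) + p) / k), ?_⟩
  unfold modeAngle
  rw [hvalR]
  push_cast
  field_simp

theorem sin_modeAngle_add_sub (m p : Fin k) :
    sin (modeAngle k j (m + p) - modeAngle k j p) = sin (modeAngle k j m) := by
  obtain ⟨n, hn⟩ := modeAngle_add j m p
  rw [hn, add_sub_right_comm, add_sub_cancel_right, sin_sub_nat_mul_two_pi]

theorem sin_modeAngle_odd [NeZero k] : Function.Odd fun m : Fin k => sin (modeAngle k j m) := by
  intro m
  show sin (modeAngle k j (-m)) = -sin (modeAngle k j m)
  obtain ⟨n, hn⟩ := modeAngle_add j (-m) m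
  have h0 : modeAngle k j 0 = 0 := by simp [modeAngle]
  rw [neg_add_cancel, h0] at hn
  rw [show modeAngle k j (-m) = -modeAngle k j m + n * (2 * π) by linarith,
    sin_add_nat_mul_two_pi, sin_neg]

theorem sum_sin_modeAngle_add [NeZero k] (hj : ¬ k ∣ j) (x : ℝ) :
    ∑ m : Fin k, sin (modeAngle k j m + x) = 0 := by
  have hζ := Complex.isPrimitiveRoot_exp k (NeZero.ne k)
  set ζ := Complex.exp (2 * π * Complex.I / k)
  have hζj : ζ ^ j ≠ 1 := by rwa [Ne, hζ.pow_eq_one_iff_dvd]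
  have hgeom : ∑ m : Fin k, (ζ ^ j) ^ (m : ℕ) = 0 := by
    rw [Fin.sum_univ_eq_sum_range (fun n => (ζ ^ j) ^ n), geom_sum_eq hζj, ← pow_mul, mul_comm,
      pow_mul, hζ.pow_eq_one, one_pow, sub_self, zero_div]
  have hterm : ∀ m : Fin k, Complex.exp ((modeAngle k j m + x : ℝ) * Complex.I) =
      Complex.exp (x * Complex.I) * (ζ ^ j) ^ (m : ℕ) := by
    intro m
    rw [← pow_mul, ← Complex.exp_nat_mul, ← Complex.exp_add]
    congr 1
    unfold modeAngle
    push_cast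
    field_simp
    ring
  calc ∑ m : Fin k, sin (modeAngle k j m + x)
      = (∑ m : Fin k, Complex.exp ((modeAngle k j m + x : ℝ) * Complex.I)).im := by
        simp only [Complex.im_sum, Complex.exp_ofReal_mul_I_im]
    _ = 0 := by simp only [hterm, ← mul_sum, hgeom, mul_zero, Complex.zero_im]

theorem sum_mul_sin_modeAngle_of_even [NeZero k] {c : Fin k → ℝ} (hc : c.Even) :
    ∑ m : Fin k, c m * sin (modeAngle k j m) = 0 :=
  (hc.mul_odd (sin_modeAngle_odd j)).sum_eq_zero

theorem sum_circulant_mul_sin_modeAngle_sub [NeZero k] {c : Fin k → ℝ} (hc : c.Even)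
    (p : Fin k) :
    ∑ m : Fin k, Matrix.circulant c p m * sin (modeAngle k j m - modeAngle k j p) = 0 := by
  rw [← Equiv.sum_comp (Equiv.addRight p)]
  simp only [Equiv.coe_addRight, Matrix.circulant_apply, sub_add_cancel_right, hc _,
    sin_modeAngle_add_sub]
  exact sum_mul_sin_modeAngle_of_even j hc

end

theorem join_identical_circulant_equilibrium_general (k : ℕ) (c : Fin k → ℝ)
    (hsym : ∀ m : Fin k, c m = c (-m)) (α β : ℝ)
    (j : ℕ) (hj1 : 1 ≤ j) (hj2 : j ≤ k - 1)
    (φ : ℝ) :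
    let A : Matrix (Fin k ⊕ Fin k) (Fin k ⊕ Fin k) ℝ :=
      Matrix.fromBlocks (Matrix.circulant c) (Matrix.of fun _ _ => α)
        (Matrix.of fun _ _ => β) (Matrix.circulant c)
    let θ : Fin k ⊕ Fin k → ℝ :=
      Sum.elim (fun m : Fin k => 2 * Real.pi * j * (m : ℕ) / k)
        (fun m : Fin k => 2 * Real.pi * j * (m : ℕ) / k + φ)
    ∀ i : Fin k ⊕ Fin k, ∑ m : Fin k ⊕ Fin k, A i m * Real.sin (θ m - θ i) = 0 := by
  intro A θ i
  have : NeZero k := ⟨by omega⟩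
  have hθ : θ = Sum.elim (modeAngle k j) (fun m => modeAngle k j m + φ) := rfl
  have hj : ¬ k ∣ j := Nat.not_dvd_of_pos_of_lt hj1 (by omega)
  have hc : c.Even := fun m => (hsym m).symm
  rcases i with p | p <;>
    simp only [hθ, A, Fintype.sum_sum_type, Matrix.fromBlocks_apply₁₁, Matrix.fromBlocks_apply₁₂,
      Matrix.fromBlocks_apply₂₁, Matrix.fromBlocks_apply₂₂, Matrix.of_apply, Sum.elim_inl,
      Sum.elim_inr, ← mul_sum]
  · simp only [add_sub_assoc, sum_circulant_mul_sin_modeAngle_sub j hc,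
      sum_sin_modeAngle_add j hj, mul_zero, add_zero]
  · simp only [sub_eq_add_neg (modeAngle k j _) (modeAngle k j p + φ), add_sub_add_right_eq_sub,
      sum_circulant_mul_sin_modeAngle_sub j hc, sum_sin_modeAngle_add j hj, mul_zero, add_zero]

/-- Join of two identical symmetric circulant networks: let `A` be the `2k × 2k` block
matrix with both diagonal blocks equal to a real symmetric circulant matrix `C`
(`c_m = c_{(k−m) mod k}`), top-right block constant `α` and bottom-left block constant `β`.
For `1 ≤ j ≤ k − 1` and `φ ∈ [0, 2π)`, the point `θ₀` defined by `θ₀_m = 2πjm/k` on the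
first layer and `θ₀_{k+m} = 2πjm/k + φ` on the second layer is an equilibrium point of
the homogeneous Kuramoto model with adjacency matrix `A`:
`∑_m A_{im} sin(θ₀_m − θ₀_i) = 0` for every `i`. -/
theorem join_identical_circulant_equilibrium (k : ℕ) (hk : 1 ≤ k) (c : Fin k → ℝ)
    (hsym : ∀ m : Fin k, c m = c (-m)) (α β : ℝ)
    (j : ℕ) (hj1 : 1 ≤ j) (hj2 : j ≤ k - 1)
    (φ : ℝ) (hφ0 : 0 ≤ φ) (hφ2 : φ < 2 * Real.pi) :
    let A : Matrix (Fin k ⊕ Fin k) (Fin k ⊕ Fin k) ℝ :=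
      Matrix.fromBlocks (Matrix.circulant c) (Matrix.of fun _ _ => α)
        (Matrix.of fun _ _ => β) (Matrix.circulant c)
    let θ : Fin k ⊕ Fin k → ℝ :=
      Sum.elim (fun m : Fin k => 2 * Real.pi * j * (m : ℕ) / k)
        (fun m : Fin k => 2 * Real.pi * j * (m : ℕ) / k + φ)
    ∀ i : Fin k ⊕ Fin k, ∑ m : Fin k ⊕ Fin k, A i m * Real.sin (θ m - θ i) = 0 :=
  join_identical_circulant_equilibrium_general k c hsym α β j hj1 hj2 φ
end

section
/- Let A = (a_ij) be an N×N real matrix, θ₀ = (θ₁,…,θ_N) ∈ ℝ^N, and λ ∈ ℝ. Suppose that the real vectors (cos θ₁, …, cos θ_N) and (sin θ₁, …, sin θ_N) are both eigenvectors of A associated with the same real eigenvalue λ, i.e. A·(cos θ₀) = λ (cos θ₀) and A·(sin θ₀) = λ (sin θ₀). Then the complex vector (exp(i θ₁), …, exp(i θ_N)) is an eigenvector of A (viewed as a complex matrix) associated with the eigenvalue λ, and consequently ∑_{j=1}^N a_ij sin(θ_j − θ_i) = 0 for every i, i.e. θ₀ is an equilibrium point of the homogeneous Kuramoto model with adjacency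 matrix A. -/
/-- If the real vectors `cos θ₀` and `sin θ₀` (componentwise) are both eigenvectors of
the real matrix `A` associated with the same real eigenvalue `λ`, then the complex
vector `e^{iθ₀}` (componentwise) is an eigenvector of `A` (viewed as a complex matrix)
associated with `λ`, and consequently `∑_j a_ij sin(θ_j − θ_i) = 0` for every `i`:
`θ₀` is an equilibrium point of the homogeneous Kuramoto model with adjacency matrix `A`. -/
theorem designed_equilibrium (N : ℕ) (a : Matrix (Fin N) (Fin N) ℝ)
    (θ : Fin N → ℝ) (lam : ℝ)
    (hcos : a.mulVec (fun k => Real.cos (θ k)) = lam • fun k => Real.cos (θ k))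
    (hsin : a.mulVec (fun k => Real.sin (θ k)) = lam • fun k => Real.sin (θ k)) :
    (a.map Complex.ofReal).mulVec (fun k => Complex.exp (Complex.I * θ k))
        = (lam : ℂ) • (fun k => Complex.exp (Complex.I * θ k)) ∧
    ∀ i, ∑ j, a i j * Real.sin (θ j - θ i) = 0 := by
  have hc : ∀ i, ∑ j, a i j * Real.cos (θ j) = lam * Real.cos (θ i) := by
    intro i
    have := congrFun hcos i
    simpa [Matrix.mulVec, dotProduct] using this
  have hs : ∀ i, ∑ j, a i j * Real.sin (θ j) = lam * Real.sin (θ i) := by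
    intro i
    have := congrFun hsin i
    simpa [Matrix.mulVec, dotProduct] using this
  constructor
  · funext i
    have hexp : ∀ k, Complex.exp (Complex.I * θ k)
        = Real.cos (θ k) + Real.sin (θ k) * Complex.I := by
      intro k
      rw [mul_comm, Complex.exp_mul_I]
      simp [Complex.ofReal_cos, Complex.ofReal_sin]
    simp only [Matrix.mulVec, dotProduct, Matrix.map_apply, Pi.smul_apply,
      smul_eq_mul, hexp]
    have : ∑ j, (a i j : ℂ) * (Real.cos (θ j) + Real.sin (θ j) * Complex.I)
        = (↑(∑ j, a i j * Real.cos (θ j)) : ℂ)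
          + (↑(∑ j, a i j * Real.sin (θ j)) : ℂ) * Complex.I := by
      push_cast
      rw [Finset.sum_mul, ← Finset.sum_add_distrib]
      congr 1; ext j; ring
    rw [this, hc i, hs i]
    push_cast
    ring
  · intro i
    have : ∀ j, a i j * Real.sin (θ j - θ i)
        = Real.cos (θ i) * (a i j * Real.sin (θ j))
          - Real.sin (θ i) * (a i j * Real.cos (θ j)) := by
      intro j; rw [Real.sin_sub]; ring
    simp only [this]
    rw [Finset.sum_sub_distrib, ← Finset.mul_sum, ← Finset.mul_sum, hc i, hs i]
    ring
end
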